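/- arXiv:1408.6011 — 7 statements merged into one kernel-verified Lean document; each statement's English description precedes it below -/
import Mathlib

section
/- In the n-BTS conservative spectrum allocation problem (P1), if the problem is feasible, then there exists an optimal allocation x* whose number of active reuse patterns is at most n, i.e., |{B ⊆ N : x*_B > 0}| ≤ n. -/
open Finset

/-- Service rate of BTS `i` under allocation `x`: `r_i(x) = Σ_{B ⊆ N} s_{i,B} x_B`. -/
noncomputable def serviceRate {n : ℕ} (s : Fin n → Finset (Fin n) → ℝ)
    (x : Finset (Fin n) → ℝ) (i : Fin n) : ℝ :=
  ∑ B : Finset (Fin n), s i B * x B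

/-- A spectrum allocation: nonnegative and summing to 1 over all reuse patterns. -/
def IsAlloc {n : ℕ} (x : Finset (Fin n) → ℝ) : Prop :=
  (∀ B, 0 ≤ x B) ∧ (∑ B : Finset (Fin n), x B) = 1

/-- Feasibility for problem (P1): allocation with `r_i(x) > λ_i` for all `i`. -/
def Feasible {n : ℕ} (s : Fin n → Finset (Fin n) → ℝ) (lam : Fin n → ℝ)
    (x : Finset (Fin n) → ℝ) : Prop :=
  IsAlloc x ∧ ∀ i, lam i < serviceRate s x i

/-- Average delay `D(x) = (Σ_j λ_j)⁻¹ Σ_i λ_i / (r_i(x) − λ_i)`. -/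
noncomputable def Delay {n : ℕ} (s : Fin n → Finset (Fin n) → ℝ) (lam : Fin n → ℝ)
    (x : Finset (Fin n) → ℝ) : ℝ :=
  (∑ j, lam j)⁻¹ * ∑ i, lam i / (serviceRate s x i - lam i)

/-- Optimality for problem (P1). -/
def Optimal {n : ℕ} (s : Fin n → Finset (Fin n) → ℝ) (lam : Fin n → ℝ)
    (x : Finset (Fin n) → ℝ) : Prop :=
  Feasible s lam x ∧ ∀ y, Feasible s lam y → Delay s lam x ≤ Delay s lam y

/-!
The delay depends on `x` only through the rate vector `r(x)`, which ranges over the convex hull `A`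
of the columns `s_{·,B}`. Because the delay blows up as some `r_i` decreases to `λ_i`, its sublevel
sets in `A ∩ {r > λ}` are compact, so it attains its minimum at some `r*`. The delay is strictly
decreasing in every rate, so `r*` is Pareto optimal in `A`, and Hahn–Banach gives a nonzero
functional `f` minimized over `A` at `r*`. By Carathéodory, `r*` is a combination with positive
weights of affinely independent columns; positivity forces all of them onto the hyperplane
`f = f r*`, which holds at most `n` affinely independent points. These weights form the allocation.
-/

section Caratheodory

variable {E : Type*} [AddCommGroup E] [Module ℝ E]

theorem AffineIndependent.card_le_finrank_of_apply_eq [FiniteDimensional ℝ E] {ι : Type*}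
    [Fintype ι] {z : ι → E} (hz : AffineIndependent ℝ z) {f : Module.Dual ℝ E} (hf : f ≠ 0)
    {c : ℝ} (hfz : ∀ i, f (z i) = c) : Fintype.card ι ≤ Module.finrank ℝ E := by
  have hspan : vectorSpan ℝ (Set.range z) ≤ LinearMap.ker f := by
    rw [vectorSpan_def, Submodule.span_le]
    rintro _ ⟨_, ⟨i, rfl⟩, _, ⟨j, rfl⟩, rfl⟩
    simp [hfz]
  calc Fintype.card ι ≤ Module.finrank ℝ (vectorSpan ℝ (Set.range z)) + 1 :=
        hz.card_le_finrank_succ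
    _ ≤ Module.finrank ℝ (LinearMap.ker f) + 1 := by gcongr; exact Submodule.finrank_mono hspan
    _ = Module.finrank ℝ E := f.finrank_ker_add_one_of_ne_zero hf

theorem apply_eq_of_sum_smul_eq_of_forall_le {ι : Type*} [Fintype ι] (f : E →ₗ[ℝ] ℝ)
    {z : ι → E} {c : ι → ℝ} {x : E} (hc : ∀ i, 0 < c i) (hc1 : ∑ i, c i = 1)
    (hx : ∑ i, c i • z i = x) (hle : ∀ i, f x ≤ f (z i)) (i : ι) : f (z i) = f x := by
  have hsum : ∑ i, c i * (f (z i) - f x) = 0 := by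
    simp only [mul_sub, sum_sub_distrib, ← sum_mul, hc1, one_mul, ← hx, map_sum, map_smul,
      smul_eq_mul, sub_self]
  have hi := (sum_eq_zero_iff_of_nonneg fun i _ =>
    mul_nonneg (hc i).le (sub_nonneg.2 (hle i))).1 hsum i (mem_univ i)
  exact sub_eq_zero.1 ((mul_eq_zero.1 hi).resolve_left (hc i).ne')

theorem exists_weights_of_range_subset {β ι : Type*} [Fintype β] [Fintype ι] {g : β → E}
    {z : ι → E} (hz : Set.range z ⊆ Set.range g) (c : ι → ℝ) (hc : ∀ i, 0 ≤ c i) :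
    ∃ w : β → ℝ, (∀ b, 0 ≤ w b) ∧ ∑ b, w b = ∑ i, c i ∧ ∑ b, w b • g b = ∑ i, c i • z i ∧
      {b | 0 < w b}.ncard ≤ Fintype.card ι := by
  classical
  choose pick hpick using fun i => hz ⟨i, rfl⟩
  refine ⟨fun b => ∑ i with pick i = b, c i, fun b => sum_nonneg fun i _ => hc i,
    sum_fiberwise _ _ _, ?_, ?_⟩
  · calc ∑ b, (∑ i with pick i = b, c i) • g b
          = ∑ b, ∑ i with pick i = b, c i • g (pick i) := by
            simp_rw [sum_smul]
            exact sum_congr rfl fun b _ => sum_congr rfl fun i hi => by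
              rw [(mem_filter.1 hi).2]
      _ = ∑ i, c i • z i := by simp only [hpick]; exact sum_fiberwise univ pick _
  · have hsupp : {b | 0 < ∑ i with pick i = b, c i} ⊆ (univ.image pick : Set β) := by
      intro b hb
      replace hb : 0 < ∑ i with pick i = b, c i := hb
      obtain ⟨i, hi, -⟩ := exists_ne_zero_of_sum_ne_zero hb.ne'
      exact mem_image.2 ⟨i, mem_univ i, (mem_filter.1 hi).2⟩
    calc _ ≤ (univ.image pick : Set β).ncard := Set.ncard_le_ncard hsupp (finite_toSet _)
      _ = (univ.image pick).card := Set.ncard_coe_finset _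
      _ ≤ Fintype.card ι := card_image_le

theorem exists_weights_card_le_finrank_of_forall_le [FiniteDimensional ℝ E] {β : Type*}
    [Fintype β] {g : β → E} {x : E} (hx : x ∈ convexHull ℝ (Set.range g))
    {f : Module.Dual ℝ E} (hf : f ≠ 0) (hmin : ∀ b, f x ≤ f (g b)) :
    ∃ w : β → ℝ, (∀ b, 0 ≤ w b) ∧ ∑ b, w b = 1 ∧ ∑ b, w b • g b = x ∧
      {b | 0 < w b}.ncard ≤ Module.finrank ℝ E := by
  obtain ⟨ι, _, z, c, hzg, hz, hc, hc1, hcz⟩ := eq_pos_convex_span_of_mem_convexHull hx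
  have hfz := apply_eq_of_sum_smul_eq_of_forall_le f hc hc1 hcz fun i => by
    obtain ⟨b, hb⟩ := hzg ⟨i, rfl⟩
    exact hb ▸ hmin b
  obtain ⟨w, hw0, hw1, hwx, hwcard⟩ := exists_weights_of_range_subset hzg c fun i => (hc i).le
  exact ⟨w, hw0, hw1.trans hc1, hwx.trans hcz,
    hwcard.trans (hz.card_le_finrank_of_apply_eq hf hfz)⟩

end Caratheodory

section Rates

variable {ι : Type*} [Fintype ι]

theorem exists_ne_zero_isMinOn_of_not_dominated {A : Set (ι → ℝ)} (hA : Convex ℝ A)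
    {r : ι → ℝ} (hr : r ∈ A) (hdom : ∀ r' ∈ A, ¬ ∀ i, r i < r' i) :
    ∃ f : Module.Dual ℝ (ι → ℝ), f ≠ 0 ∧ IsMinOn f A r := by
  set U : Set (ι → ℝ) := Set.univ.pi fun i => Set.Ioi (r i)
  have hUA : Disjoint U A :=
    Set.disjoint_left.2 fun r' hU hA' => hdom r' hA' fun i => hU i (Set.mem_univ i)
  obtain ⟨f, u, hfU, hfA⟩ := geometric_hahn_banach_open
    (convex_pi fun i _ => convex_Ioi (r i)) (isOpen_set_pi Set.finite_univ fun i _ => isOpen_Ioi)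
    hA hUA
  have hrU : r ∈ closure U := by simp [U, closure_pi_set]
  have hfr : f r ≤ u :=
    closure_minimal (fun a ha => (hfU a ha).le) (isClosed_le f.continuous continuous_const) hrU
  refine ⟨f.toLinearMap, fun hf0 => ?_, fun y hy => hfr.trans (hfA y hy)⟩
  have h1 : f (r + 1) < f r := (hfU _ fun i _ => by simp).trans_le (hfA r hr)
  simp [← ContinuousLinearMap.coe_coe, hf0] at h1

noncomputable def rateDelay (lam r : ι → ℝ) : ℝ :=
  ∑ i, lam i / (r i - lam i)

variable {lam : ι → ℝ}

theorem lam_add_div_le_of_rateDelay_le (hlam : ∀ i, 0 < lam i) {r : ι → ℝ}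
    (hr : ∀ i, lam i < r i) {K : ℝ} (hK : rateDelay lam r ≤ K) (i : ι) :
    0 < K ∧ lam i + lam i / K ≤ r i := by
  have hterm_pos : 0 < lam i / (r i - lam i) := div_pos (hlam i) (sub_pos.2 (hr i))
  have hterm : lam i / (r i - lam i) ≤ K :=
    (single_le_sum (fun j _ => (div_pos (hlam j) (sub_pos.2 (hr j))).le) (mem_univ i)).trans hK
  have hKpos : 0 < K := hterm_pos.trans_le hterm
  refine ⟨hKpos, ?_⟩
  have := (div_le_comm₀ (sub_pos.2 (hr i)) hKpos).1 hterm
  linarith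

theorem exists_isMinOn_rateDelay {A : Set (ι → ℝ)} (hA : IsCompact A) (hlam : ∀ i, 0 < lam i)
    {r₀ : ι → ℝ} (hr₀ : r₀ ∈ A ∩ {r | ∀ i, lam i < r i}) :
    ∃ rs ∈ A ∩ {r | ∀ i, lam i < r i}, IsMinOn (rateDelay lam) (A ∩ {r | ∀ i, lam i < r i}) rs := by
  set F := A ∩ {r | ∀ i, lam i < r i}
  set K := rateDelay lam r₀
  set M := A ∩ {r | ∀ i, lam i + lam i / K ≤ r i}
  have hFM : ∀ r ∈ F, rateDelay lam r ≤ K → r ∈ M := fun r hr hK =>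
    ⟨hr.1, fun i => (lam_add_div_le_of_rateDelay_le hlam hr.2 hK i).2⟩
  have hMF : M ⊆ F := fun r hr => ⟨hr.1, fun i => by
    have hK := (lam_add_div_le_of_rateDelay_le hlam hr₀.2 le_rfl i).1
    linarith [hr.2 i, div_pos (hlam i) hK]⟩
  have hM : IsCompact M := hA.inter_right <| by
    simp only [Set.ofPred_forall]
    exact isClosed_iInter fun i => isClosed_le continuous_const (continuous_apply i)
  have hcont : ContinuousOn (rateDelay lam) M :=
    continuousOn_finsetSum _ fun i _ => continuousOn_const.div
      ((continuous_apply i).sub continuous_const).continuousOn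
      fun r hr => (sub_pos.2 ((hMF hr).2 i)).ne'
  have hr₀M := hFM r₀ hr₀ le_rfl
  obtain ⟨rs, hrs, hmin⟩ := hM.exists_isMinOn ⟨r₀, hr₀M⟩ hcont
  refine ⟨rs, hMF hrs, fun r hr => ?_⟩
  by_cases hK : rateDelay lam r ≤ K
  · exact hmin (hFM r hr hK)
  · exact (hmin hr₀M).trans (not_le.1 hK).le

theorem rateDelay_lt_of_forall_lt [Nonempty ι] (hlam : ∀ i, 0 < lam i) {r r' : ι → ℝ}
    (hr : ∀ i, lam i < r i) (hrr' : ∀ i, r i < r' i) : rateDelay lam r' < rateDelay lam r :=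
  sum_lt_sum_of_nonempty univ_nonempty fun i _ =>
    div_lt_div_of_pos_left (hlam i) (sub_pos.2 (hr i)) (sub_lt_sub_right (hrr' i) _)

theorem not_dominated_of_isMinOn_rateDelay [Nonempty ι] (hlam : ∀ i, 0 < lam i)
    {A : Set (ι → ℝ)} {rs : ι → ℝ} (hrs : rs ∈ A ∩ {r | ∀ i, lam i < r i})
    (hmin : IsMinOn (rateDelay lam) (A ∩ {r | ∀ i, lam i < r i}) rs) :
    ∀ r' ∈ A, ¬ ∀ i, rs i < r' i := fun _ hr' hlt =>
  (rateDelay_lt_of_forall_lt hlam hrs.2 hlt).not_ge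
    (hmin ⟨hr', fun i => (hrs.2 i).trans (hlt i)⟩)

end Rates

section SpectrumAllocation

variable {n : ℕ} (s : Fin n → Finset (Fin n) → ℝ)

theorem serviceRate_eq_sum_smul (x : Finset (Fin n) → ℝ) :
    serviceRate s x = ∑ B, x B • fun i => s i B := by
  ext i
  simp [serviceRate, mul_comm]

theorem serviceRate_mem_convexHull {x : Finset (Fin n) → ℝ} (hx : IsAlloc x) :
    serviceRate s x ∈ convexHull ℝ (Set.range fun B i => s i B) := by
  rw [serviceRate_eq_sum_smul]
  exact (convex_convexHull ℝ _).sum_mem (fun B _ => hx.1 B) hx.2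
    fun B _ => subset_convexHull ℝ _ ⟨B, rfl⟩

theorem delay_eq_rateDelay (lam : Fin n → ℝ) (x : Finset (Fin n) → ℝ) :
    Delay s lam x = (∑ j, lam j)⁻¹ * rateDelay lam (serviceRate s x) :=
  rfl

end SpectrumAllocation

theorem conservative_optimal_at_most_n_patterns_general {n : ℕ} (hn : 1 ≤ n)
    (s : Fin n → Finset (Fin n) → ℝ)
    (lam : Fin n → ℝ) (hlam : ∀ i, 0 < lam i)
    (hfeas : ∃ x, Feasible s lam x) :
    ∃ x : Finset (Fin n) → ℝ, Optimal s lam x ∧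
      {B : Finset (Fin n) | 0 < x B}.ncard ≤ n := by
  obtain ⟨x₀, hx₀⟩ := hfeas
  have : Nonempty (Fin n) := ⟨⟨0, hn⟩⟩
  have hA : IsCompact (convexHull ℝ (Set.range fun B i => s i B)) :=
    (Set.finite_range _).isCompact_convexHull (𝕜 := ℝ)
  obtain ⟨rs, hrs, hmin⟩ :=
    exists_isMinOn_rateDelay hA hlam ⟨serviceRate_mem_convexHull s hx₀.1, hx₀.2⟩
  obtain ⟨f, hf, hfmin⟩ := exists_ne_zero_isMinOn_of_not_dominated (convex_convexHull ℝ _)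
    hrs.1 (not_dominated_of_isMinOn_rateDelay hlam hrs hmin)
  obtain ⟨x, hx0, hx1, hxrs, hxcard⟩ := exists_weights_card_le_finrank_of_forall_le hrs.1 hf
    fun B => hfmin (subset_convexHull ℝ _ ⟨B, rfl⟩)
  have hxr : serviceRate s x = rs := (serviceRate_eq_sum_smul s x).trans hxrs
  refine ⟨x, ⟨⟨⟨hx0, hx1⟩, hxr ▸ hrs.2⟩, fun y hy => ?_⟩, by simpa using hxcard⟩
  rw [delay_eq_rateDelay, delay_eq_rateDelay, hxr]
  exact mul_le_mul_of_nonneg_left (hmin ⟨serviceRate_mem_convexHull s hy.1, hy.2⟩)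
    (inv_nonneg.2 (sum_nonneg fun j _ => (hlam j).le))

/-- if (P1) is feasible, some optimal allocation has at most `n`
active reuse patterns. -/
theorem conservative_optimal_at_most_n_patterns {n : ℕ} (hn : 1 ≤ n)
    (s : Fin n → Finset (Fin n) → ℝ)
    (hs_nonneg : ∀ i B, 0 ≤ s i B)
    (hs_zero : ∀ (i : Fin n) (B : Finset (Fin n)), i ∉ B → s i B = 0)
    (lam : Fin n → ℝ) (hlam : ∀ i, 0 < lam i)
    (hfeas : ∃ x, Feasible s lam x) :
    ∃ x : Finset (Fin n) → ℝ, Optimal s lam x ∧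
      {B : Finset (Fin n) | 0 < x B}.ncard ≤ n :=
  conservative_optimal_at_most_n_patterns_general hn s lam hlam hfeas
end

section
/- In the n-BTS conservative spectrum allocation problem (P1), for any optimal allocation x* and any subset M ⊆ N with |M| = m, there exists an optimal allocation x such that x_B = x*_B for every B ⊆ N not contained in M, and the spectrum exclusively used by the base stations in M is divided into at most m segments, i.e., |{B ⊆ M : x_B > 0}| ≤ m. -/
open Finset

/-! Consider the patterns `B ⊆ M` used by an optimal allocation and the vectors
`(1, (s_{i,B})_{i ∈ M}) ∈ ℝ^{1+m}`. If there are more than `m` of them, either they are linearly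
dependent, and shifting spectrum along a dependency keeps the total and every rate fixed until one
used pattern is emptied; or they are exactly `m + 1` vectors spanning `ℝ^{1+m}`, and some
redistribution among them raises every rate in `M`, contradicting optimality. Only patterns inside
`M` change, so by `s_{i,B} = 0` for `i ∉ B` the rates outside `M` stay fixed. For `M = ∅` the only
candidate is the empty pattern, which an optimal allocation never uses. -/

theorem exists_ne_zero_sum_smul_eq_zero_or_exists_sum_smul_eq {K V ι : Type*} [Field K]
    [AddCommGroup V] [Module K V] [FiniteDimensional K V] [Fintype ι] (w : ι → V)
    (hcard : Module.finrank K V ≤ Fintype.card ι) (v : V) :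
    (∃ c : ι → K, c ≠ 0 ∧ ∑ i, c i • w i = 0) ∨ ∃ c : ι → K, ∑ i, c i • w i = v := by
  by_cases hw : LinearIndependent K w
  · right
    have hspan := hw.span_eq_top_of_card_eq_finrank' (hcard.antisymm' hw.fintype_card_le_finrank)
    exact (Submodule.mem_span_range_iff_exists_fun K).1 (hspan ▸ Submodule.mem_top)
  · obtain ⟨c, hc, i, hi⟩ := Fintype.not_linearIndependent_iff.1 hw
    exact .inl ⟨c, fun h => hi (congrFun h i), hc⟩

theorem exists_neg_of_sum_eq_zero {ι : Type*} [Fintype ι] {d : ι → ℝ} (hd : d ≠ 0)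
    (hsum : ∑ i, d i = 0) : ∃ i, d i < 0 := by
  by_contra! h
  exact hd ((Fintype.sum_eq_zero_iff_of_nonneg h).1 hsum)

theorem exists_forall_nonneg_add_div_mul {ι : Type*} [Fintype ι] {x d : ι → ℝ}
    (hx : ∀ i, 0 ≤ x i) (hd : ∃ i, d i < 0) :
    ∃ j, d j < 0 ∧ ∀ i, 0 ≤ x i + x j / -d j * d i := by
  classical
  obtain ⟨i₀, hi₀⟩ := hd
  obtain ⟨j, hj, hmin⟩ := exists_min_image (univ.filter fun i => d i < 0)
    (fun i => x i / -d i) ⟨i₀, by simpa using hi₀⟩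
  refine ⟨j, (mem_filter.1 hj).2, fun i => ?_⟩
  have hε : 0 ≤ x j / -d j := div_nonneg (hx j) (neg_nonneg.2 (mem_filter.1 hj).2.le)
  rcases lt_or_ge (d i) 0 with hi | hi
  · have := hmin i (by simpa using hi)
    rw [le_div_iff₀ (neg_pos.2 hi)] at this
    linarith
  · exact add_nonneg (hx i) (mul_nonneg hε hi)

theorem exists_supported_sum_eq_zero_and_kernel_or_ones {ι κ : Type*} [Fintype ι]
    (F : Finset ι) (M : Finset κ) (a : κ → ι → ℝ) (hcard : #M < #F) :
    ∃ d : ι → ℝ, (∀ B ∉ F, d B = 0) ∧ ∑ B, d B = 0 ∧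
      ((d ≠ 0 ∧ ∀ i ∈ M, ∑ B, a i B * d B = 0) ∨ ∀ i ∈ M, ∑ B, a i B * d B = 1) := by
  classical
  let w : F → ℝ × (M → ℝ) := fun B => (1, fun i => a i B)
  have hdim : Module.finrank ℝ (ℝ × (M → ℝ)) ≤ Fintype.card F := by
    simp only [Module.finrank_prod, Module.finrank_self, Module.finrank_fintype_fun_eq_card,
      Fintype.card_coe]
    omega
  let extend (c : F → ℝ) (B : ι) : ℝ := if h : B ∈ F then c ⟨B, h⟩ else 0
  have sum_mul_extend (c : F → ℝ) (f : ι → ℝ) :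
      ∑ B, f B * extend c B = ∑ B : F, f B * c B := by
    rw [← sum_subset (subset_univ F) fun B _ hB => by simp [extend, hB], ← sum_coe_sort F]
    exact sum_congr rfl fun B _ => by simp [extend]
  have fst_sum (c : F → ℝ) : (∑ B, c B • w B).1 = ∑ B, extend c B := by
    simpa [w, Prod.fst_sum] using (sum_mul_extend c 1).symm
  have snd_sum (c : F → ℝ) (i : M) : (∑ B, c B • w B).2 i = ∑ B, a i B * extend c B := by
    simp [w, Prod.snd_sum, sum_mul_extend, mul_comm]
  have extend_support (c : F → ℝ) : ∀ B ∉ F, extend c B = 0 := fun B hB => by simp [extend, hB]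
  rcases exists_ne_zero_sum_smul_eq_zero_or_exists_sum_smul_eq w hdim (0, 1)
    with ⟨c, hc, hker⟩ | ⟨c, hc⟩
  · refine ⟨extend c, extend_support c, by rw [← fst_sum, hker]; rfl, .inl ⟨?_, fun i hi => ?_⟩⟩
    · intro h
      exact hc (funext fun B => by simpa [extend] using congrFun h B)
    · rw [← snd_sum c ⟨i, hi⟩, hker]; rfl
  · refine ⟨extend c, extend_support c, by rw [← fst_sum, hc], .inr fun i hi => ?_⟩
    rw [← snd_sum c ⟨i, hi⟩, hc]; rfl

section Allocation

variable {n : ℕ} {s : Fin n → Finset (Fin n) → ℝ} {lam : Fin n → ℝ}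
  {x z d : Finset (Fin n) → ℝ}

theorem serviceRate_add_smul (s : Fin n → Finset (Fin n) → ℝ) (x d : Finset (Fin n) → ℝ)
    (ε : ℝ) (i : Fin n) :
    serviceRate s (x + ε • d) i = serviceRate s x i + ε * ∑ B, s i B * d B := by
  simp only [serviceRate, Pi.add_apply, Pi.smul_apply, smul_eq_mul, mul_add, sum_add_distrib,
    mul_sum, mul_left_comm]

theorem IsAlloc.add_smul (hx : IsAlloc x) (hd : ∑ B, d B = 0) {ε : ℝ}
    (hnonneg : ∀ B, 0 ≤ x B + ε * d B) : IsAlloc (x + ε • d) :=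
  ⟨hnonneg, by simp [sum_add_distrib, ← mul_sum, hd, hx.2]⟩

theorem Feasible.of_serviceRate_le (hx : Feasible s lam x) (hz : IsAlloc z)
    (hr : ∀ i, serviceRate s x i ≤ serviceRate s z i) : Feasible s lam z :=
  ⟨hz, fun i => (hx.2 i).trans_le (hr i)⟩

theorem delay_le_of_serviceRate_le (hlam : ∀ i, 0 ≤ lam i) (hx : Feasible s lam x)
    (hr : ∀ i, serviceRate s x i ≤ serviceRate s z i) : Delay s lam z ≤ Delay s lam x := by
  have hgap (i : Fin n) : 0 < serviceRate s x i - lam i := sub_pos.2 (hx.2 i)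
  unfold Delay
  gcongr with i
  · exact inv_nonneg.2 (sum_nonneg fun i _ => hlam i)
  · exact hlam i
  · exact hgap i
  · exact hr i

theorem delay_lt_of_serviceRate_lt (hlam : ∀ i, 0 < lam i) (hx : Feasible s lam x)
    (hr : ∀ i, serviceRate s x i ≤ serviceRate s z i) {i₀ : Fin n}
    (hi₀ : serviceRate s x i₀ < serviceRate s z i₀) : Delay s lam z < Delay s lam x := by
  have hgap (i : Fin n) : 0 < serviceRate s x i - lam i := sub_pos.2 (hx.2 i)
  have hlam_sum : 0 < ∑ j, lam j := sum_pos (fun j _ => hlam j) ⟨i₀, mem_univ i₀⟩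
  unfold Delay
  refine mul_lt_mul_of_pos_left (sum_lt_sum (fun i _ => ?_) ⟨i₀, mem_univ i₀, ?_⟩)
    (inv_pos.2 hlam_sum)
  · exact div_le_div_of_nonneg_left (hlam i).le (hgap i) (by linarith [hr i])
  · exact div_lt_div_of_pos_left (hlam i₀) (hgap i₀) (by linarith)

theorem Optimal.of_serviceRate_le (hx : Optimal s lam x) (hlam : ∀ i, 0 ≤ lam i)
    (hz : IsAlloc z) (hr : ∀ i, serviceRate s x i ≤ serviceRate s z i) : Optimal s lam z :=
  ⟨hx.1.of_serviceRate_le hz hr,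
    fun y hy => (delay_le_of_serviceRate_le hlam hx.1 hr).trans (hx.2 y hy)⟩

theorem Optimal.serviceRate_eq_of_le (hx : Optimal s lam x) (hlam : ∀ i, 0 < lam i)
    (hz : IsAlloc z) (hr : ∀ i, serviceRate s x i ≤ serviceRate s z i) (i : Fin n) :
    serviceRate s z i = serviceRate s x i := by
  by_contra hne
  exact (hx.2 z (hx.1.of_serviceRate_le hz hr)).not_gt
    (delay_lt_of_serviceRate_lt hlam hx.1 hr ((hr i).lt_of_ne' hne))

theorem Optimal.sum_mul_eq_zero_of_sum_mul_nonneg (hx : Optimal s lam x)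
    (hlam : ∀ i, 0 < lam i) (hd_sum : ∑ B, d B = 0) (hd_neg : ∀ B, d B < 0 → 0 < x B)
    (hd_rate : ∀ i, 0 ≤ ∑ B, s i B * d B) (i : Fin n) : ∑ B, s i B * d B = 0 := by
  by_cases hd : d = 0
  · simp [hd]
  obtain ⟨B₀, hB₀, hstep⟩ := exists_forall_nonneg_add_div_mul hx.1.1.1
    (exists_neg_of_sum_eq_zero hd hd_sum)
  have hε : 0 < x B₀ / -d B₀ := div_pos (hd_neg B₀ hB₀) (neg_pos.2 hB₀)
  have hrate := hx.serviceRate_eq_of_le hlam (hx.1.1.add_smul hd_sum hstep)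
    (fun i => by simpa [serviceRate_add_smul] using mul_nonneg hε.le (hd_rate i)) i
  rw [serviceRate_add_smul, add_eq_left] at hrate
  exact (mul_eq_zero.1 hrate).resolve_left hε.ne'

end Allocation

section Patterns

variable {n : ℕ} {s : Fin n → Finset (Fin n) → ℝ} {lam : Fin n → ℝ} {x d : Finset (Fin n) → ℝ}

theorem Optimal.apply_empty_eq_zero (hn : 1 ≤ n) (hs_nonneg : ∀ i B, 0 ≤ s i B)
    (hs_zero : ∀ i B, i ∉ B → s i B = 0) (hlam : ∀ i, 0 < lam i) (hx : Optimal s lam x) :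
    x ∅ = 0 := by
  classical
  by_contra hne
  have hx_empty : 0 < x ∅ := (hx.1.1.1 ∅).lt_of_ne' hne
  let j : Fin n := ⟨0, hn⟩
  obtain ⟨B₀, -, hB₀⟩ : ∃ B ∈ univ, (0 : ℝ) < s j B * x B :=
    exists_lt_of_sum_lt (by simpa [serviceRate] using (hlam j).trans (hx.1.2 j))
  -- move all the spectrum of the empty pattern to `B₀`
  let d : Finset (Fin n) → ℝ := Pi.single B₀ 1 - Pi.single ∅ 1
  have hd_rate (i : Fin n) : ∑ B, s i B * d B = s i B₀ := by
    simp [d, Pi.single_apply, mul_sub, sum_sub_distrib, hs_zero i ∅ (notMem_empty i)]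
  have hd_neg (B : Finset (Fin n)) (hB : d B < 0) : 0 < x B := by
    by_cases h : B = ∅
    · exact h ▸ hx_empty
    · have : 0 ≤ d B := by simp [d, Pi.single_apply, h]; positivity
      exact absurd hB this.not_gt
  have := hx.sum_mul_eq_zero_of_sum_mul_nonneg hlam (by simp [d, sum_sub_distrib]) hd_neg
    (fun i => (hd_rate i).symm ▸ hs_nonneg i B₀) j
  rw [hd_rate] at this
  exact hB₀.ne' (by rw [this, zero_mul])

noncomputable def usedPatterns (M : Finset (Fin n)) (x : Finset (Fin n) → ℝ) :
    Finset (Finset (Fin n)) :=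
  M.powerset.filter fun B => 0 < x B

theorem mem_usedPatterns {M B : Finset (Fin n)} : B ∈ usedPatterns M x ↔ B ⊆ M ∧ 0 < x B := by
  simp [usedPatterns]

theorem Optimal.usedPatterns_empty (hn : 1 ≤ n) (hs_nonneg : ∀ i B, 0 ≤ s i B)
    (hs_zero : ∀ i B, i ∉ B → s i B = 0) (hlam : ∀ i, 0 < lam i) (hx : Optimal s lam x) :
    usedPatterns ∅ x = ∅ := by
  ext B
  simp only [mem_usedPatterns, subset_empty, notMem_empty, iff_false, not_and]
  rintro rfl
  simp [hx.apply_empty_eq_zero hn hs_nonneg hs_zero hlam]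

theorem Optimal.exists_usedPatterns_ssubset_of_sum_mul_eq_zero (hx : Optimal s lam x)
    (hlam : ∀ i, 0 < lam i) {M : Finset (Fin n)} (hd_ne : d ≠ 0) (hd_sum : ∑ B, d B = 0)
    (hdF : ∀ B ∉ usedPatterns M x, d B = 0) (hd_rate : ∀ i, ∑ B, s i B * d B = 0) :
    ∃ z, Optimal s lam z ∧ (∀ B, ¬ B ⊆ M → z B = x B) ∧ usedPatterns M z ⊂ usedPatterns M x := by
  obtain ⟨B₀, hB₀, hstep⟩ := exists_forall_nonneg_add_div_mul hx.1.1.1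
    (exists_neg_of_sum_eq_zero hd_ne hd_sum)
  set z := x + (x B₀ / -d B₀) • d
  have hz_eq (B : Finset (Fin n)) (hB : B ∉ usedPatterns M x) : z B = x B := by
    simp [z, hdF B hB]
  have hz_B₀ : z B₀ = 0 := by
    simp only [z, Pi.add_apply, Pi.smul_apply, smul_eq_mul]
    field_simp [hB₀.ne]
    ring
  have hB₀_mem : B₀ ∈ usedPatterns M x := by
    by_contra h
    exact hB₀.ne (hdF B₀ h)
  refine ⟨z, hx.of_serviceRate_le (fun i => (hlam i).le) (hx.1.1.add_smul hd_sum hstep)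
    (fun i => by simp [z, serviceRate_add_smul, hd_rate]),
    fun B hB => hz_eq B fun h => hB (mem_usedPatterns.1 h).1, ?_⟩
  refine (ssubset_iff_of_subset fun B hB => ?_).2
    ⟨B₀, hB₀_mem, fun h => (mem_usedPatterns.1 h).2.ne' hz_B₀⟩
  obtain ⟨hBM, hzB⟩ := mem_usedPatterns.1 hB
  by_contra hBx
  exact hBx (mem_usedPatterns.2 ⟨hBM, hz_eq B hBx ▸ hzB⟩)

theorem Optimal.exists_usedPatterns_ssubset (hn : 1 ≤ n) (hs_nonneg : ∀ i B, 0 ≤ s i B)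
    (hs_zero : ∀ i B, i ∉ B → s i B = 0) (hlam : ∀ i, 0 < lam i) (hx : Optimal s lam x)
    {M : Finset (Fin n)} (hM : #M < #(usedPatterns M x)) :
    ∃ z, Optimal s lam z ∧ (∀ B, ¬ B ⊆ M → z B = x B) ∧ usedPatterns M z ⊂ usedPatterns M x := by
  rcases M.eq_empty_or_nonempty with rfl | ⟨i₀, hi₀⟩
  · simp [hx.usedPatterns_empty hn hs_nonneg hs_zero hlam] at hM
  obtain ⟨d, hdF, hd_sum, hd⟩ :=
    exists_supported_sum_eq_zero_and_kernel_or_ones (usedPatterns M x) M s hM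
  have hd_mem {B : Finset (Fin n)} (hB : d B ≠ 0) : B ⊆ M ∧ 0 < x B := by
    by_contra h
    exact hB (hdF B (mt mem_usedPatterns.1 h))
  have hd_outside (i : Fin n) (hi : i ∉ M) : ∑ B, s i B * d B = 0 := by
    refine sum_eq_zero fun B _ => ?_
    by_cases hB : d B = 0
    · rw [hB, mul_zero]
    · rw [hs_zero i B fun h => hi ((hd_mem hB).1 h), zero_mul]
  rcases hd with ⟨hd_ne, hd_inside⟩ | hd_inside
  · refine hx.exists_usedPatterns_ssubset_of_sum_mul_eq_zero hlam hd_ne hd_sum hdF fun i => ?_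
    by_cases hi : i ∈ M
    exacts [hd_inside i hi, hd_outside i hi]
  · -- a redistribution raising every rate in `M` contradicts optimality
    have hd_rate_nonneg (i : Fin n) : 0 ≤ ∑ B, s i B * d B := by
      by_cases hi : i ∈ M
      · rw [hd_inside i hi]; exact zero_le_one
      · rw [hd_outside i hi]
    have := hx.sum_mul_eq_zero_of_sum_mul_nonneg hlam hd_sum (fun B hB => (hd_mem hB.ne).2)
      hd_rate_nonneg i₀
    exact absurd (hd_inside i₀ hi₀) (this ▸ zero_ne_one)

theorem Optimal.exists_card_usedPatterns_le (hn : 1 ≤ n) (hs_nonneg : ∀ i B, 0 ≤ s i B)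
    (hs_zero : ∀ i B, i ∉ B → s i B = 0) (hlam : ∀ i, 0 < lam i) (hx : Optimal s lam x)
    (M : Finset (Fin n)) :
    ∃ z, Optimal s lam z ∧ (∀ B, ¬ B ⊆ M → z B = x B) ∧ #(usedPatterns M z) ≤ #M := by
  induction hk : #(usedPatterns M x) using Nat.strong_induction_on generalizing x with
  | _ k ih =>
    by_cases hle : #(usedPatterns M x) ≤ #M
    · exact ⟨x, hx, fun _ _ => rfl, hle⟩
    obtain ⟨y, hy, hyx, hssub⟩ :=
      hx.exists_usedPatterns_ssubset hn hs_nonneg hs_zero hlam (not_le.1 hle)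
    obtain ⟨z, hz, hzy, hcard⟩ := ih _ (hk ▸ card_lt_card hssub) hy rfl
    exact ⟨z, hz, fun B hB => (hzy B hB).trans (hyx B hB), hcard⟩

end Patterns

/-- for any optimal allocation `x*` and any subset `M` of size `m`,
there is an optimal allocation agreeing with `x*` outside the patterns contained in `M`
and using at most `m` patterns contained in `M`. -/
theorem conservative_optimal_subset_patterns {n : ℕ} (hn : 1 ≤ n)
    (s : Fin n → Finset (Fin n) → ℝ)
    (hs_nonneg : ∀ i B, 0 ≤ s i B)
    (hs_zero : ∀ (i : Fin n) (B : Finset (Fin n)), i ∉ B → s i B = 0)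
    (lam : Fin n → ℝ) (hlam : ∀ i, 0 < lam i)
    (xstar : Finset (Fin n) → ℝ) (hopt : Optimal s lam xstar)
    (M : Finset (Fin n)) :
    ∃ x : Finset (Fin n) → ℝ, Optimal s lam x ∧
      (∀ B : Finset (Fin n), ¬ B ⊆ M → x B = xstar B) ∧
      {B : Finset (Fin n) | B ⊆ M ∧ 0 < x B}.ncard ≤ M.card := by
  obtain ⟨x, hx, hagree, hcard⟩ := hopt.exists_card_usedPatterns_le hn hs_nonneg hs_zero hlam M
  have hset : {B : Finset (Fin n) | B ⊆ M ∧ 0 < x B} = ↑(usedPatterns M x) := by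
    ext B
    simp [mem_usedPatterns]
  exact ⟨x, hx, hagree, by rwa [hset, Set.ncard_coe_finset]⟩
end

section
/- Let S be a finite set of points in ℝ^n and let r ∈ conv(S) be Pareto optimal in conv(S), i.e., there is no r' ∈ conv(S) with r'_i ≥ r_i for all i and r' ≠ r. Then r can be written as a convex combination of at most n points of S. -/
/-- a Pareto-optimal point of the convex hull of a finite set
`S ⊆ ℝⁿ` is a convex combination of at most `n` points of `S`. -/
theorem pareto_caratheodory {n : ℕ} (hn : 1 ≤ n)
    (S : Set (Fin n → ℝ)) (hS : S.Finite)
    (r : Fin n → ℝ) (hr : r ∈ convexHull ℝ S)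
    (hpareto : ∀ r' ∈ convexHull ℝ S, (∀ i, r i ≤ r' i) → r' = r) :
    ∃ T : Finset (Fin n → ℝ), ↑T ⊆ S ∧ T.card ≤ n ∧
      r ∈ convexHull ℝ (T : Set (Fin n → ℝ)) := by
  classical
  obtain ⟨ι, hι, z, w, hzS, hz, hwpos, hwsum, hwz⟩ := eq_pos_convex_span_of_mem_convexHull hr
  have hrange : r ∈ convexHull ℝ (Set.range z) := by
    have := Finset.univ.centerMass_mem_convexHull (w := w) (z := z)
      (fun i _ => (hwpos i).le) (by rw [hwsum]; norm_num)
      (fun i _ => Set.mem_range_self i)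
    rwa [Finset.centerMass_eq_of_sum_1 _ _ hwsum, hwz] at this
  have hcard : Fintype.card ι ≤ n + 1 := by
    have h1 := hz.card_le_finrank_succ
    have h2 : Module.finrank ℝ (vectorSpan ℝ (Set.range z)) ≤ n := by
      have := Submodule.finrank_le (vectorSpan ℝ (Set.range z))
      simpa using this
    omega
  by_cases hle : Fintype.card ι ≤ n
  · refine ⟨Finset.image z Finset.univ, ?_, ?_, ?_⟩
    · rw [Finset.coe_image, Finset.coe_univ, Set.image_univ]; exact hzS
    · exact Finset.card_image_le.trans (by simpa using hle)
    · rwa [Finset.coe_image, Finset.coe_univ, Set.image_univ]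
  · exfalso
    have hcard' : Fintype.card ι = n + 1 := by omega
    have htop : affineSpan ℝ (Set.range z) = ⊤ :=
      hz.affineSpan_eq_top_iff_card_eq_finrank_add_one.mpr (by simpa using hcard')
    let b : AffineBasis ι ℝ (Fin n → ℝ) := ⟨z, hz, htop⟩
    have hr_comb : r = Finset.univ.affineCombination ℝ z w := by
      rw [Finset.univ.affineCombination_eq_linear_combination _ _ hwsum]
      exact hwz.symm
    have hint : r ∈ interior (convexHull ℝ (Set.range z)) := by
      have : r ∈ interior (convexHull ℝ (Set.range ⇑b)) := by
        rw [b.interior_convexHull]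
        intro i
        rw [hr_comb]
        have : b.coord i (Finset.univ.affineCombination ℝ (⇑b) w) = w i :=
          b.coord_apply_combination_of_mem (Finset.mem_univ i) hwsum
        exact this ▸ hwpos i
      exact this
    obtain ⟨ε, hε, hball⟩ := Metric.isOpen_iff.mp isOpen_interior r hint
    set u : Fin n → ℝ := fun _ => 1 with hu
    have hunorm : 0 ≤ ‖u‖ := norm_nonneg u
    set δ : ℝ := ε / (2 * (‖u‖ + 1)) with hδdef
    have hδ : 0 < δ := by positivity
    have hdist : dist (r + δ • u) r < ε := by
      rw [dist_eq_norm, add_sub_cancel_left, norm_smul, Real.norm_of_nonneg hδ.le]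
      have key : δ * (‖u‖ + 1) = ε / 2 := by
        rw [hδdef]; field_simp
      nlinarith
    have hr' : r + δ • u ∈ convexHull ℝ S := by
      have h1 : r + δ • u ∈ interior (convexHull ℝ (Set.range z)) :=
        hball (by simpa [Metric.mem_ball] using hdist)
      exact convexHull_mono hzS (interior_subset h1)
    have heq := hpareto _ hr' (fun i => by
      simp only [Pi.add_apply, Pi.smul_apply, hu, smul_eq_mul, mul_one]
      linarith)
    have := congrFun heq ⟨0, hn⟩
    simp only [Pi.add_apply, Pi.smul_apply, hu, smul_eq_mul, mul_one] at this
    linarith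
end

section
/- In the n-BTS conservative spectrum allocation problem (P1), the optimal service-rate vector is unique: if x* and x̃ are both optimal allocations, then r_i(x*) = r_i(x̃) for all i ∈ N. -/
open Finset

/-- the optimal service-rate vector of (P1) is unique. -/
theorem conservative_optimal_rates_unique {n : ℕ} (hn : 1 ≤ n)
    (s : Fin n → Finset (Fin n) → ℝ)
    (hs_nonneg : ∀ i B, 0 ≤ s i B)
    (hs_zero : ∀ (i : Fin n) (B : Finset (Fin n)), i ∉ B → s i B = 0)
    (lam : Fin n → ℝ) (hlam : ∀ i, 0 < lam i)
    (xstar xtilde : Finset (Fin n) → ℝ)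
    (hstar : Optimal s lam xstar) (htilde : Optimal s lam xtilde) :
    ∀ i, serviceRate s xstar i = serviceRate s xtilde i := by
  by_contra hcon
  push_neg at hcon
  obtain ⟨i0, hi0⟩ := hcon
  haveI : NeZero n := ⟨by omega⟩
  set z : Finset (Fin n) → ℝ := fun B => (xstar B + xtilde B) / 2 with hzdef
  have hrz : ∀ i, serviceRate s z i
      = (serviceRate s xstar i + serviceRate s xtilde i) / 2 := by
    intro i
    simp only [serviceRate, hzdef]
    rw [Finset.sum_congr rfl (fun B _ => by ring :
      ∀ B ∈ Finset.univ, s i B * ((xstar B + xtilde B) / 2)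
        = (s i B * xstar B + s i B * xtilde B) / 2),
      ← Finset.sum_div, Finset.sum_add_distrib]
  have hfz : Feasible s lam z := by
    refine ⟨⟨fun B => ?_, ?_⟩, fun i => ?_⟩
    · exact div_nonneg (add_nonneg (hstar.1.1.1 B) (htilde.1.1.1 B)) (by norm_num)
    · simp only [hzdef]
      rw [← Finset.sum_div, Finset.sum_add_distrib, hstar.1.1.2, htilde.1.1.2]
      norm_num
    · rw [hrz i]
      have h1 := hstar.1.2 i
      have h2 := htilde.1.2 i
      linarith
  -- key convexity inequalities
  have key_le : ∀ (l a b : ℝ), 0 < l → 0 < a → 0 < b →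
      l / ((a + b) / 2) ≤ (l / a + l / b) / 2 := by
    intro l a b hl ha hb
    rw [div_add_div _ _ ha.ne' hb.ne', div_div,
      div_le_div_iff₀ (by positivity) (by positivity)]
    nlinarith [sq_nonneg (a - b)]
  have key_lt : ∀ (l a b : ℝ), 0 < l → 0 < a → 0 < b → a ≠ b →
      l / ((a + b) / 2) < (l / a + l / b) / 2 := by
    intro l a b hl ha hb hne
    have habsq : 0 < (a - b) ^ 2 := by
      have : a - b ≠ 0 := sub_ne_zero.mpr hne
      positivity
    rw [div_add_div _ _ ha.ne' hb.ne', div_div,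
      div_lt_div_iff₀ (by positivity) (by positivity)]
    nlinarith
  have ha : ∀ i, 0 < serviceRate s xstar i - lam i := fun i => sub_pos.mpr (hstar.1.2 i)
  have hb : ∀ i, 0 < serviceRate s xtilde i - lam i := fun i => sub_pos.mpr (htilde.1.2 i)
  have hsum : ∑ i, lam i / (serviceRate s z i - lam i)
      < ∑ i, (lam i / (serviceRate s xstar i - lam i)
            + lam i / (serviceRate s xtilde i - lam i)) / 2 := by
    apply Finset.sum_lt_sum
    · intro i _
      have := key_le (lam i) _ _ (hlam i) (ha i) (hb i)
      rw [hrz i]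
      have hrw : (serviceRate s xstar i + serviceRate s xtilde i) / 2 - lam i
          = ((serviceRate s xstar i - lam i) + (serviceRate s xtilde i - lam i)) / 2 := by
        ring
      rw [hrw]
      exact this
    · refine ⟨i0, Finset.mem_univ i0, ?_⟩
      have hne : serviceRate s xstar i0 - lam i0 ≠ serviceRate s xtilde i0 - lam i0 := by
        intro h; exact hi0 (by linarith [sub_left_injective.eq_iff.mp h])
      have := key_lt (lam i0) _ _ (hlam i0) (ha i0) (hb i0) hne
      rw [hrz i0]
      have hrw : (serviceRate s xstar i0 + serviceRate s xtilde i0) / 2 - lam i0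
          = ((serviceRate s xstar i0 - lam i0) + (serviceRate s xtilde i0 - lam i0)) / 2 := by
        ring
      rw [hrw]
      exact this
  have hlsum : 0 < ∑ j, lam j :=
    Finset.sum_pos (fun j _ => hlam j) Finset.univ_nonempty
  have hDz : Delay s lam z
      < (Delay s lam xstar + Delay s lam xtilde) / 2 := by
    unfold Delay
    have hc : 0 < (∑ j, lam j)⁻¹ := inv_pos.mpr hlsum
    have h2 := mul_lt_mul_of_pos_left hsum hc
    calc (∑ j, lam j)⁻¹ * ∑ i, lam i / (serviceRate s z i - lam i)
        < (∑ j, lam j)⁻¹ * ∑ i, (lam i / (serviceRate s xstar i - lam i)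
            + lam i / (serviceRate s xtilde i - lam i)) / 2 := h2
      _ = ((∑ j, lam j)⁻¹ * ∑ i, lam i / (serviceRate s xstar i - lam i)
          + (∑ j, lam j)⁻¹ * ∑ i, lam i / (serviceRate s xtilde i - lam i)) / 2 := by
          rw [← Finset.sum_div, Finset.sum_add_distrib]
          ring
  have heq : Delay s lam xstar = Delay s lam xtilde :=
    le_antisymm (hstar.2 _ htilde.1) (htilde.2 _ hstar.1)
  have := hstar.2 z hfz
  rw [heq] at this
  linarith
end

section
/- For any stationary distribution p of the lumped-chain rate matrix Q̂, the expected departure rate of each queue equals its arrival rate: Σ_{A ⊆ N, i∈A} p(A) r_{i,A} = λ_i for every i ∈ N; equivalently, Σ_{A ⊆ N, i∈A} p(A) r_{i,A}/λ_i = 1. -/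
open Finset

/-- The lumped-chain rate matrix `Q̂`: from state `A`, queue `i ∉ A` turns on at rate
`λ_i` (moving to `insert i A`), queue `i ∈ A` empties at rate `r_{i,A} − λ_i`
(moving to `A.erase i`), and the diagonal entry is minus the total outgoing rate. -/
noncomputable def Qhat {n : ℕ} (lam : Fin n → ℝ) (r : Fin n → Finset (Fin n) → ℝ)
    (A B : Finset (Fin n)) : ℝ :=
  if A = B then -((∑ i ∈ Aᶜ, lam i) + ∑ i ∈ A, (r i A - lam i))
  else (∑ i ∈ Aᶜ, if B = insert i A then lam i else 0)
    + ∑ i ∈ A, if B = A.erase i then r i A - lam i else 0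

/-- A stationary distribution of the lumped chain `Q̂`. -/
def IsStationaryLumped {n : ℕ} (lam : Fin n → ℝ) (r : Fin n → Finset (Fin n) → ℝ)
    (p : Finset (Fin n) → ℝ) : Prop :=
  (∀ A, 0 ≤ p A ∧ p A ≤ 1) ∧ (∑ A : Finset (Fin n), p A) = 1 ∧
    ∀ B : Finset (Fin n), (∑ A : Finset (Fin n), p A * Qhat lam r A B) = 0

/-- The refined delay approximation
`t_i = Σ_{A ∋ i} p(A) r_{i,A} / ((r_{i,A} − λ_i) λ_i)`. -/
noncomputable def tApprox {n : ℕ} (lam : Fin n → ℝ) (r : Fin n → Finset (Fin n) → ℝ)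
    (p : Finset (Fin n) → ℝ) (i : Fin n) : ℝ :=
  ∑ A ∈ Finset.univ.filter (fun A : Finset (Fin n) => i ∈ A),
    p A * r i A / ((r i A - lam i) * lam i)

/-- The second-degree upper bound
`t̄_i = Σ_{Ā ⊆ N∖{i}} π̄_i(Ā) / (r_{i,Ā∪{i}} − λ_i)` with `p̄_j = λ_j / r_{j,N}`. -/
noncomputable def tUpper {n : ℕ} (lam : Fin n → ℝ) (r : Fin n → Finset (Fin n) → ℝ)
    (i : Fin n) : ℝ :=
  ∑ A ∈ (Finset.univ.erase i).powerset,
    ((∏ j ∈ A, lam j / r j Finset.univ) *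
      ∏ l ∈ (Finset.univ.erase i) \ A, (1 - lam l / r l Finset.univ)) /
      (r i (insert i A) - lam i)

/-- The second-degree lower bound
`t̲_i = 1 / (Σ_{A̲ ⊆ N∖{i}} π̲_i(A̲) r_{i,A̲∪{i}} − λ_i)` with `p̲_j = λ_j / r_{j,{j}}`. -/
noncomputable def tLower {n : ℕ} (lam : Fin n → ℝ) (r : Fin n → Finset (Fin n) → ℝ)
    (i : Fin n) : ℝ :=
  1 / ((∑ A ∈ (Finset.univ.erase i).powerset,
    ((∏ j ∈ A, lam j / r j {j}) *
      ∏ l ∈ (Finset.univ.erase i) \ A, (1 - lam l / r l {l})) *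
      r i (insert i A)) - lam i)

/-! Sum the balance equations of `p` over the states `B ∋ i`. From a state `A ∌ i` the only jump
into `{B | i ∈ B}` switches queue `i` on, at rate `λ_i`; from `A ∋ i` the row of `Q̂` sums to zero,
so its mass on `{B | i ∈ B}` is minus the rate `r_{i,A} − λ_i` of emptying queue `i`. Hence
`0 = Σ_A p(A) (λ_i − [i ∈ A] r_{i,A}) = λ_i − Σ_{A ∋ i} p(A) r_{i,A}`. -/

section LumpedChain

variable {n : ℕ} (lam : Fin n → ℝ) (r : Fin n → Finset (Fin n) → ℝ)

theorem Qhat_eq_diag_add_jumps (A B : Finset (Fin n)) :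
    Qhat lam r A B =
      (if A = B then -((∑ j ∈ Aᶜ, lam j) + ∑ j ∈ A, (r j A - lam j)) else 0)
        + ((∑ j ∈ Aᶜ, if B = insert j A then lam j else 0)
          + ∑ j ∈ A, if B = A.erase j then r j A - lam j else 0) := by
  by_cases hAB : A = B
  · subst hAB
    have no_insert : ∀ j ∈ Aᶜ, A ≠ insert j A := fun j hj h =>
      mem_compl.mp hj (insert_eq_self.mp h.symm)
    have no_erase : ∀ j ∈ A, A ≠ A.erase j := fun j hj h => erase_eq_self.mp h.symm hj
    simp only [Qhat, if_true]
    rw [sum_eq_zero fun j hj => if_neg (no_insert j hj),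
      sum_eq_zero fun j hj => if_neg (no_erase j hj)]
    ring
  · simp only [Qhat, if_neg hAB, zero_add]

theorem sum_Qhat_mem (i : Fin n) (A : Finset (Fin n)) :
    ∑ B ∈ univ.filter (fun B => i ∈ B), Qhat lam r A B
      = lam i - if i ∈ A then r i A else 0 := by
  simp_rw [Qhat_eq_diag_add_jumps, sum_add_distrib]
  rw [sum_comm (s := univ.filter _) (t := Aᶜ), sum_comm (s := univ.filter _) (t := A)]
  simp only [sum_ite_eq, sum_ite_eq', mem_filter, mem_univ, true_and, mem_insert, mem_erase]
  by_cases hiA : i ∈ A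
  · simp only [hiA, if_true, or_true, and_true]
    rw [← sum_filter, filter_ne, ← add_sum_erase A _ hiA]
    ring
  · simp only [hiA, if_false, or_false, and_false, sum_const_zero]
    rw [sum_ite_eq, if_pos (mem_compl.mpr hiA)]
    ring

theorem sum_mem_mul_r_eq_lam {p : Finset (Fin n) → ℝ} (hsum : ∑ A, p A = 1)
    (hbal : ∀ B, ∑ A, p A * Qhat lam r A B = 0) (i : Fin n) :
    ∑ A ∈ univ.filter (fun A => i ∈ A), p A * r i A = lam i := by
  have flux_zero : ∑ A, p A * (lam i - if i ∈ A then r i A else 0) = 0 := by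
    simp_rw [← sum_Qhat_mem, mul_sum]
    rw [sum_comm]
    exact sum_eq_zero fun B _ => hbal B
  simp_rw [mul_sub, sum_sub_distrib, ← sum_mul, hsum, one_mul, mul_ite, mul_zero,
    ← sum_filter] at flux_zero
  linarith

end LumpedChain

theorem stationary_flow_balance_general {n : ℕ}
    (lam : Fin n → ℝ) (hlam : ∀ i, 0 < lam i)
    (r : Fin n → Finset (Fin n) → ℝ)
    (p : Finset (Fin n) → ℝ) (hp : IsStationaryLumped lam r p) :
    ∀ i : Fin n,
      (∑ A ∈ Finset.univ.filter (fun A : Finset (Fin n) => i ∈ A), p A * r i A) = lam i ∧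
      (∑ A ∈ Finset.univ.filter (fun A : Finset (Fin n) => i ∈ A), p A * r i A / lam i) = 1 := by
  intro i
  obtain ⟨-, hsum, hbal⟩ := hp
  have hflow := sum_mem_mul_r_eq_lam lam r hsum hbal i
  refine ⟨hflow, ?_⟩
  rw [← sum_div, hflow, div_self (hlam i).ne']

/-- under any stationary distribution of the lumped chain, the expected
departure rate of each queue equals its arrival rate. -/
theorem stationary_flow_balance {n : ℕ} (hn : 1 ≤ n)
    (lam : Fin n → ℝ) (hlam : ∀ i, 0 < lam i)
    (r : Fin n → Finset (Fin n) → ℝ)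
    (hr_pos : ∀ (i : Fin n) (A : Finset (Fin n)), i ∈ A → 0 < r i A)
    (hr_mono : ∀ (i : Fin n) (A B : Finset (Fin n)), i ∈ A → A ⊆ B → r i B ≤ r i A)
    (hstab : ∀ i, lam i < r i Finset.univ)
    (p : Finset (Fin n) → ℝ) (hp : IsStationaryLumped lam r p) :
    ∀ i : Fin n,
      (∑ A ∈ Finset.univ.filter (fun A : Finset (Fin n) => i ∈ A), p A * r i A) = lam i ∧
      (∑ A ∈ Finset.univ.filter (fun A : Finset (Fin n) => i ∈ A), p A * r i A / lam i) = 1 :=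
  stationary_flow_balance_general lam hlam r p hp
end

section
/- For any stationary distribution p of the lumped-chain rate matrix Q̂, the refined delay approximation t_i = Σ_{A ⊆ N, i∈A} p(A) r_{i,A}/((r_{i,A} − λ_i)λ_i) satisfies the Jensen bound t_i ≥ t'_i, where t'_i = 1/(Σ_{A ⊆ N, i∈A} p(A) (r_{i,A}/λ_i) · r_{i,A} − λ_i). -/
open Finset

/-! Summing the balance equations of `Q̂` over the states containing `i` gives the flow balance
across that cut, `∑_{A ∋ i} p(A) r_{i,A} = λ_i`. So `w_A = p(A) r_{i,A} / λ_i` is a probability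
vector on these states; `t_i` is the `w`-mean of `(r_{i,A} − λ_i)⁻¹`, while the denominator of
`t'_i` is the `w`-mean of `r_{i,A} − λ_i`, positive by monotonicity and stability. Jensen's
inequality for `x ↦ x⁻¹` on `(0, ∞)` concludes. -/

section LumpedChain

variable {n : ℕ} (lam : Fin n → ℝ) (r : Fin n → Finset (Fin n) → ℝ)

lemma Qhat_eq_jump_sub_diag (A B : Finset (Fin n)) :
    Qhat lam r A B =
      (∑ j ∈ Aᶜ, if B = insert j A then lam j else 0)
        + (∑ j ∈ A, if B = A.erase j then r j A - lam j else 0)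
        - if B = A then (∑ j ∈ Aᶜ, lam j) + ∑ j ∈ A, (r j A - lam j) else 0 := by
  rcases eq_or_ne A B with rfl | hAB
  · have hins : ∀ j ∈ Aᶜ, A ≠ insert j A := fun j hj h =>
      mem_compl.mp hj (insert_eq_self.mp h.symm)
    have hera : ∀ j ∈ A, A ≠ A.erase j := fun j hj h => erase_eq_self.mp h.symm hj
    simp +contextual [Qhat, hins, hera]
  · simp [Qhat, hAB, hAB.symm]

lemma sum_Qhat_filter_mem (i : Fin n) (A : Finset (Fin n)) :
    ∑ B ∈ univ.filter (i ∈ ·), Qhat lam r A B = if i ∈ A then -(r i A - lam i) else lam i := by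
  simp only [Qhat_eq_jump_sub_diag, sum_sub_distrib, sum_add_distrib]
  rw [sum_comm, sum_comm (s := univ.filter _) (t := A)]
  simp only [sum_ite_eq', mem_filter, mem_univ, true_and, mem_insert, mem_erase]
  split_ifs with hi
  · simp only [hi, or_true, and_true, if_true, ← sum_filter, filter_ne, sum_erase_eq_sub hi,
      sum_sub_distrib]
    ring
  · simp [hi]

variable {lam r} in
lemma IsStationaryLumped.sum_filter_mem_mul_r_eq_lam {p : Finset (Fin n) → ℝ}
    (hp : IsStationaryLumped lam r p) (i : Fin n) :
    ∑ A ∈ univ.filter (i ∈ ·), p A * r i A = lam i := by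
  have hcut : ∑ A, p A * (if i ∈ A then -(r i A - lam i) else lam i) = 0 := by
    simp only [← sum_Qhat_filter_mem, mul_sum]
    rw [sum_comm]
    exact sum_eq_zero fun B _ => hp.2.2 B
  have hsplit : ∑ A, p A * (if i ∈ A then -(r i A - lam i) else lam i)
      = lam i * ∑ A, p A - ∑ A ∈ univ.filter (i ∈ ·), p A * r i A := by
    rw [mul_sum, sum_filter, ← sum_sub_distrib]
    refine sum_congr rfl fun A _ => ?_
    split_ifs <;> ring
  rw [hsplit, hp.2.1] at hcut
  linarith

end LumpedChain

theorem refined_approx_jensen_bound_general {n : ℕ}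
    (lam : Fin n → ℝ) (hlam : ∀ i, 0 < lam i)
    (r : Fin n → Finset (Fin n) → ℝ)
    (hr_mono : ∀ (i : Fin n) (A B : Finset (Fin n)), i ∈ A → A ⊆ B → r i B ≤ r i A)
    (hstab : ∀ i, lam i < r i Finset.univ)
    (p : Finset (Fin n) → ℝ) (hp : IsStationaryLumped lam r p) :
    ∀ i : Fin n,
      1 / ((∑ A ∈ Finset.univ.filter (fun A : Finset (Fin n) => i ∈ A),
          p A * (r i A / lam i) * r i A) - lam i) ≤ tApprox lam r p i := by
  intro i
  set S := univ.filter (fun A : Finset (Fin n) => i ∈ A)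
  have hgap : ∀ A ∈ S, lam i < r i A := fun A hA =>
    (hstab i).trans_le (hr_mono i A univ (mem_filter.1 hA).2 (subset_univ A))
  have hw : ∀ A ∈ S, 0 ≤ p A * r i A / lam i := fun A hA =>
    div_nonneg (mul_nonneg (hp.1 A).1 ((hlam i).trans (hgap A hA)).le) (hlam i).le
  have hw1 : ∑ A ∈ S, p A * r i A / lam i = 1 := by
    rw [← sum_div, hp.sum_filter_mem_mul_r_eq_lam, div_self (hlam i).ne']
  have hmean : ∑ A ∈ S, p A * r i A / lam i * (r i A - lam i)
      = ∑ A ∈ S, p A * (r i A / lam i) * r i A - lam i := by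
    have hlam0 : lam i ≠ 0 := (hlam i).ne'
    calc ∑ A ∈ S, p A * r i A / lam i * (r i A - lam i)
        = ∑ A ∈ S, (p A * (r i A / lam i) * r i A - p A * r i A) :=
          sum_congr rfl fun A _ => by field_simp
      _ = _ := by rw [sum_sub_distrib, hp.sum_filter_mem_mul_r_eq_lam]
  have hharm :
      ∑ A ∈ S, p A * r i A / lam i * (r i A - lam i) ^ (-1 : ℤ) = tApprox lam r p i :=
    sum_congr rfl fun A _ => by rw [zpow_neg_one, ← div_eq_mul_inv, div_div, mul_comm (lam i)]
  have hjensen := Real.zpow_arith_mean_le_arith_mean_zpow S _ _ hw hw1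
    (fun A hA => sub_pos.2 (hgap A hA)) (-1)
  rwa [hmean, hharm, zpow_neg_one, ← one_div] at hjensen

/-- the refined delay approximation dominates the Jensen bound
`t'_i = 1/(Σ_{A ∋ i} p(A) (r_{i,A}/λ_i) r_{i,A} − λ_i)`. -/
theorem refined_approx_jensen_bound {n : ℕ} (hn : 1 ≤ n)
    (lam : Fin n → ℝ) (hlam : ∀ i, 0 < lam i)
    (r : Fin n → Finset (Fin n) → ℝ)
    (hr_pos : ∀ (i : Fin n) (A : Finset (Fin n)), i ∈ A → 0 < r i A)
    (hr_mono : ∀ (i : Fin n) (A B : Finset (Fin n)), i ∈ A → A ⊆ B → r i B ≤ r i A)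
    (hstab : ∀ i, lam i < r i Finset.univ)
    (p : Finset (Fin n) → ℝ) (hp : IsStationaryLumped lam r p) :
    ∀ i : Fin n,
      1 / ((∑ A ∈ Finset.univ.filter (fun A : Finset (Fin n) => i ∈ A),
          p A * (r i A / lam i) * r i A) - lam i) ≤ tApprox lam r p i :=
  refined_approx_jensen_bound_general lam hlam r hr_mono hstab p hp
end

section
/- The second-degree delay bounds are at least as tight as the first-degree bounds: for every i ∈ N, the second-degree upper bound satisfies t̄_i ≤ 1/(r_{i,N} − λ_i) (the first-degree upper bound, i.e., the conservative M/M/1 approximation), and the second-degree lower bound satisfies t̲_i ≥ 1/(r_{i,{i}} − λ_i) (the first-degree lower bound). -/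
open Finset

/-- A stationary distribution of the lumped chain `Q̂`. -/
def IsStationaryQhat {n : ℕ} (lam : Fin n → ℝ) (r : Fin n → Finset (Fin n) → ℝ)
    (p : Finset (Fin n) → ℝ) : Prop :=
  (∀ A, 0 ≤ p A ∧ p A ≤ 1) ∧ (∑ A : Finset (Fin n), p A) = 1 ∧
    ∀ B : Finset (Fin n), (∑ A : Finset (Fin n), p A * Qhat lam r A B) = 0

/-!
Both second-degree bounds average a first-degree quantity against a product Bernoulli
distribution on the subsets of `N ∖ {i}`. By monotonicity, the averaged rate `r_{i, A ∪ {i}}`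
lies between `r_{i,N}` and `r_{i,{i}}`; since the weights are nonnegative and sum to `1`, so
does every average of these rates, and `1 / (r_{i, A ∪ {i}} − λ_i)` stays below
`1 / (r_{i,N} − λ_i)`.
-/

section BernoulliWeight

variable {α : Type*} [DecidableEq α] (S : Finset α) (p : α → ℝ)

def bernoulliWeight (A : Finset α) : ℝ :=
  (∏ j ∈ A, p j) * ∏ l ∈ S \ A, (1 - p l)

theorem sum_powerset_bernoulliWeight : ∑ A ∈ S.powerset, bernoulliWeight S p A = 1 := by
  simp only [bernoulliWeight]
  rw [← prod_add]
  simp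

variable {S p}

theorem bernoulliWeight_nonneg (hp0 : ∀ j ∈ S, 0 ≤ p j) (hp1 : ∀ j ∈ S, p j ≤ 1)
    {A : Finset α} (hA : A ⊆ S) : 0 ≤ bernoulliWeight S p A :=
  mul_nonneg (prod_nonneg fun j hj => hp0 j (hA hj))
    (prod_nonneg fun l hl => sub_nonneg.2 (hp1 l (sdiff_subset hl)))

theorem sum_bernoulliWeight_mul_le (hp0 : ∀ j ∈ S, 0 ≤ p j) (hp1 : ∀ j ∈ S, p j ≤ 1)
    {f : Finset α → ℝ} {c : ℝ} (hf : ∀ A ⊆ S, f A ≤ c) :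
    ∑ A ∈ S.powerset, bernoulliWeight S p A * f A ≤ c :=
  calc ∑ A ∈ S.powerset, bernoulliWeight S p A * f A
      ≤ ∑ A ∈ S.powerset, bernoulliWeight S p A * c :=
        sum_le_sum fun A hA => mul_le_mul_of_nonneg_left (hf A (mem_powerset.1 hA))
          (bernoulliWeight_nonneg hp0 hp1 (mem_powerset.1 hA))
    _ = c := by rw [← sum_mul, sum_powerset_bernoulliWeight, one_mul]

theorem le_sum_bernoulliWeight_mul (hp0 : ∀ j ∈ S, 0 ≤ p j) (hp1 : ∀ j ∈ S, p j ≤ 1)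
    {f : Finset α → ℝ} {c : ℝ} (hf : ∀ A ⊆ S, c ≤ f A) :
    c ≤ ∑ A ∈ S.powerset, bernoulliWeight S p A * f A :=
  calc c = ∑ A ∈ S.powerset, bernoulliWeight S p A * c := by
        rw [← sum_mul, sum_powerset_bernoulliWeight, one_mul]
    _ ≤ ∑ A ∈ S.powerset, bernoulliWeight S p A * f A :=
        sum_le_sum fun A hA => mul_le_mul_of_nonneg_left (hf A (mem_powerset.1 hA))
          (bernoulliWeight_nonneg hp0 hp1 (mem_powerset.1 hA))

end BernoulliWeight

section DelayBounds

variable {n : ℕ} (lam : Fin n → ℝ) (r : Fin n → Finset (Fin n) → ℝ) (i : Fin n)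

theorem tUpper_eq_sum_bernoulliWeight_mul :
    tUpper lam r i = ∑ A ∈ (univ.erase i).powerset,
      bernoulliWeight (univ.erase i) (fun j => lam j / r j univ) A *
        (1 / (r i (insert i A) - lam i)) := by
  simp only [tUpper, bernoulliWeight, mul_one_div]

theorem tLower_eq_one_div_sum_bernoulliWeight_mul :
    tLower lam r i = 1 / (∑ A ∈ (univ.erase i).powerset,
      bernoulliWeight (univ.erase i) (fun j => lam j / r j {j}) A * r i (insert i A) - lam i) :=
  rfl

end DelayBounds

theorem second_degree_tighter_than_first_degree_general {n : ℕ}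
    (lam : Fin n → ℝ) (hlam : ∀ i, 0 < lam i)
    (r : Fin n → Finset (Fin n) → ℝ)
    (hr_mono : ∀ (i : Fin n) (A B : Finset (Fin n)), i ∈ A → A ⊆ B → r i B ≤ r i A)
    (hstab : ∀ i, lam i < r i Finset.univ) :
    ∀ i : Fin n,
      tUpper lam r i ≤ 1 / (r i Finset.univ - lam i) ∧
      1 / (r i {i} - lam i) ≤ tLower lam r i := by
  intro i
  have hr_univ_le : ∀ j A, j ∈ A → r j univ ≤ r j A := fun j A hj =>
    hr_mono j A univ hj (subset_univ A)
  have hr_mem : ∀ A : Finset (Fin n), i ∈ insert i A := fun A => mem_insert_self i A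
  have hlam_lt : ∀ j A, j ∈ A → lam j < r j A := fun j A hj =>
    (hstab j).trans_le (hr_univ_le j A hj)
  have hprob_nonneg : ∀ j A, j ∈ A → 0 ≤ lam j / r j A := fun j A hj =>
    div_nonneg (hlam j).le ((hlam j).trans (hlam_lt j A hj)).le
  have hprob_le_one : ∀ j A, j ∈ A → lam j / r j A ≤ 1 := fun j A hj =>
    div_le_one_of_le₀ (hlam_lt j A hj).le ((hlam j).trans (hlam_lt j A hj)).le
  refine ⟨?_, ?_⟩
  · rw [tUpper_eq_sum_bernoulliWeight_mul]
    refine sum_bernoulliWeight_mul_le (fun j _ => hprob_nonneg j univ (mem_univ j))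
      (fun j _ => hprob_le_one j univ (mem_univ j)) fun A _ => ?_
    exact one_div_le_one_div_of_le (sub_pos.2 (hstab i)) (by linarith [hr_univ_le i _ (hr_mem A)])
  · rw [tLower_eq_one_div_sum_bernoulliWeight_mul]
    have hp0 := fun j (_ : j ∈ univ.erase i) => hprob_nonneg j {j} (mem_singleton_self j)
    have hp1 := fun j (_ : j ∈ univ.erase i) => hprob_le_one j {j} (mem_singleton_self j)
    have havg_ge := le_sum_bernoulliWeight_mul hp0 hp1 fun A _ => hr_univ_le i _ (hr_mem A)
    have havg_le := sum_bernoulliWeight_mul_le hp0 hp1 fun A _ =>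
      hr_mono i {i} (insert i A) (mem_singleton_self i) (singleton_subset_iff.2 (hr_mem A))
    exact one_div_le_one_div_of_le (by linarith [hstab i]) (by linarith)

/-- the second-degree bounds are at least as tight as the first-degree
bounds: `t̄_i ≤ 1/(r_{i,N} − λ_i)` and `t̲_i ≥ 1/(r_{i,{i}} − λ_i)`. -/
theorem second_degree_tighter_than_first_degree {n : ℕ} (hn : 1 ≤ n)
    (lam : Fin n → ℝ) (hlam : ∀ i, 0 < lam i)
    (r : Fin n → Finset (Fin n) → ℝ)
    (hr_pos : ∀ (i : Fin n) (A : Finset (Fin n)), i ∈ A → 0 < r i A)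
    (hr_mono : ∀ (i : Fin n) (A B : Finset (Fin n)), i ∈ A → A ⊆ B → r i B ≤ r i A)
    (hstab : ∀ i, lam i < r i Finset.univ) :
    ∀ i : Fin n,
      tUpper lam r i ≤ 1 / (r i Finset.univ - lam i) ∧
      1 / (r i {i} - lam i) ≤ tLower lam r i :=
  second_degree_tighter_than_first_degree_general lam hlam r hr_mono hstab
end
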